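/- Conditional distance distribution in a Matern cluster process for a near parent: if 0 < q < R, the distance g from the origin to a uniform point in the disk of radius R centered at distance q has density f(g|q) = (2g/(πR²)) arccos((g²+q²−R²)/(2gq)) for R−q ≤ g ≤ R+q, plus (2g/R²) for 0 ≤ g < R−q; this piecewise density integrates to 1. -/

import Mathlib

open MeasureTheory Metric

section MCPAux
open Real Set

theorem lintegral_comp_polarCoord_symm' (f : ℝ × ℝ → ENNReal) :
    (∫⁻ p in polarCoord.target, ENNReal.ofReal p.1 * f (polarCoord.symm p)) = ∫⁻ p, f p := by
  set B : ℝ × ℝ → ℝ × ℝ →L[ℝ] ℝ × ℝ := fun p =>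
    LinearMap.toContinuousLinearMap (Matrix.toLin (Module.Basis.finTwoProd ℝ) (Module.Basis.finTwoProd ℝ)
      !![Real.cos p.2, -p.1 * Real.sin p.2; Real.sin p.2, p.1 * Real.cos p.2])
  have A : ∀ p ∈ polarCoord.target, HasFDerivWithinAt polarCoord.symm (B p) polarCoord.target p :=
    fun p _ => (hasFDerivAt_polarCoord_symm p).hasFDerivWithinAt
  have B_det : ∀ p, (B p).det = p.1 := by
    intro p
    conv_rhs => rw [← one_mul p.1, ← cos_sq_add_sin_sq p.2]
    simp only [B, neg_mul, LinearMap.det_toContinuousLinearMap, LinearMap.det_toLin,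
      Matrix.det_fin_two_of, sub_neg_eq_add]
    ring
  symm
  calc
    ∫⁻ p, f p = ∫⁻ p in polarCoord.source, f p := by
      rw [← setLIntegral_univ]
      exact setLIntegral_congr polarCoord_source_ae_eq_univ.symm
    _ = ∫⁻ p in polarCoord.symm '' polarCoord.target, f p := by
      rw [polarCoord.symm_image_target_eq_source]
    _ = ∫⁻ p in polarCoord.target, ENNReal.ofReal |(B p).det| * f (polarCoord.symm p) := by
      exact lintegral_image_eq_lintegral_abs_det_fderiv_mul volume
        polarCoord.open_target.measurableSet A (polarCoord.symm.injOn) f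
    _ = ∫⁻ p in polarCoord.target, ENNReal.ofReal p.1 * f (polarCoord.symm p) := by
      refine setLIntegral_congr_fun_ae polarCoord.open_target.measurableSet ?_
      filter_upwards with p hp
      rw [B_det, abs_of_pos hp.1]

theorem Complex.lintegral_comp_polarCoord_symm' (f : ℂ → ENNReal) (hf : Measurable f) :
    (∫⁻ p in polarCoord.target, ENNReal.ofReal p.1 * f (Complex.polarCoord.symm p)) = ∫⁻ z, f z := by
  rw [← (Complex.volume_preserving_equiv_real_prod.symm).lintegral_comp hf]
  exact _root_.lintegral_comp_polarCoord_symm' fun p => f (Complex.measurableEquivRealProd.symm p)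

theorem angular_volume (t : ℝ) :
    volume {θ ∈ Ioo (-π) π | t < Real.cos θ} = ENNReal.ofReal (2 * Real.arccos t) := by
  rcases lt_or_ge t (-1) with ht | ht
  · have h1 : {θ ∈ Ioo (-π) π | t < Real.cos θ} = Ioo (-π) π := by
      ext θ; simp only [mem_setOf_eq, mem_sep_iff, and_iff_left_iff_imp]
      exact fun _ => lt_of_lt_of_le ht (Real.neg_one_le_cos θ)
    rw [h1, Real.volume_Ioo, Real.arccos_eq_pi.2 ht.le]
    ring_nf
  rcases le_or_gt t 1 with ht1 | ht1
  · have hat : Real.arccos t ≤ π := Real.arccos_le_pi t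
    have hct : Real.cos (Real.arccos t) = t := Real.cos_arccos ht ht1
    have h1 : {θ ∈ Ioo (-π) π | t < Real.cos θ} = Ioo (-Real.arccos t) (Real.arccos t) := by
      ext θ
      simp only [mem_setOf_eq, mem_sep_iff, mem_Ioo, ← abs_lt]
      constructor
      · rintro ⟨hθ, hcos⟩
        by_contra h
        push_neg at h
        have h2 : Real.cos |θ| ≤ Real.cos (Real.arccos t) :=
          Real.cos_le_cos_of_nonneg_of_le_pi (Real.arccos_nonneg t) hθ.le h
        rw [Real.cos_abs, hct] at h2
        exact absurd hcos (not_lt.2 h2)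
      · intro h
        refine ⟨lt_of_lt_of_le h hat, ?_⟩
        rcases eq_or_lt_of_le (abs_nonneg θ) with h0 | h0
        · rw [← Real.cos_abs, ← h0, Real.cos_zero]
          exact Real.arccos_pos.1 (lt_of_le_of_lt (abs_nonneg θ) h)
        · have h2 : Real.cos (Real.arccos t) < Real.cos |θ| :=
            Real.cos_lt_cos_of_nonneg_of_le_pi (abs_nonneg θ) hat h
          rwa [Real.cos_abs, hct] at h2
    rw [h1, Real.volume_Ioo]
    congr 1; ring
  · have h1 : {θ ∈ Ioo (-π) π | t < Real.cos θ} = ∅ := by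
      ext θ; simp only [mem_setOf_eq, mem_sep_iff, mem_empty_iff_false, iff_false, not_and]
      exact fun _ h => absurd h (not_lt.2 ((Real.cos_le_one θ).trans ht1.le))
    rw [h1, measure_empty, Real.arccos_eq_zero.2 ht1.le, mul_zero, ENNReal.ofReal_zero]

noncomputable def mcpF (R q : ℝ) : ℝ → ℝ := fun g =>
  if g ∈ Set.Icc (R - q) (R + q) then
    (2 * g / (Real.pi * R ^ 2)) * Real.arccos ((g ^ 2 + q ^ 2 - R ^ 2) / (2 * g * q))
  else if g ∈ Set.Ico (0 : ℝ) (R - q) then 2 * g / R ^ 2 else 0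

theorem mcpF_measurable (R q : ℝ) : Measurable (mcpF R q) := by
  unfold mcpF
  refine Measurable.ite measurableSet_Icc ?_ (Measurable.ite measurableSet_Ico (by fun_prop) measurable_const)
  exact ((measurable_id.const_mul 2 |>.div_const _).mul
    (Real.continuous_arccos.measurable.comp (by fun_prop)))

theorem mcpF_zero_of_nonpos (R q : ℝ) (hq : 0 < q) (hqR : q < R) {r : ℝ} (hr : r ≤ 0) :
    mcpF R q r = 0 := by
  unfold mcpF
  rw [if_neg, ite_eq_iff]
  · rcases eq_or_lt_of_le hr with rfl | hr0
    · exact Or.inl ⟨⟨le_refl 0, by linarith⟩, by ring⟩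
    · exact Or.inr ⟨fun h => absurd h.1 (not_le.2 hr0), rfl⟩
  · rintro ⟨h1, -⟩; linarith

theorem mcpF_zero_of_gt (R q : ℝ) (hq : 0 < q) (hqR : q < R) {r : ℝ} (hr : R + q < r) :
    mcpF R q r = 0 := by
  unfold mcpF
  rw [if_neg (fun h => absurd h.2 (not_le.2 hr)), if_neg (fun h => by linarith [h.2])]

/-- the pointwise identity relating polar integrand with the density -/

theorem mcpF_key (R q : ℝ) (hq : 0 < q) (hqR : q < R) {r : ℝ} (hr : 0 < r) :
    ENNReal.ofReal r * ENNReal.ofReal (2 * Real.arccos ((r ^ 2 + q ^ 2 - R ^ 2) / (2 * r * q)))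
      = ENNReal.ofReal (Real.pi * R ^ 2 * mcpF R q r) := by
  have hπ : (0:ℝ) < Real.pi := Real.pi_pos
  rw [← ENNReal.ofReal_mul hr.le]
  congr 1
  unfold mcpF
  have hR0 : (R:ℝ) ≠ 0 := (lt_trans hq hqR).ne'
  have hπ0 : Real.pi ≠ 0 := hπ.ne'
  set A := Real.arccos ((r ^ 2 + q ^ 2 - R ^ 2) / (2 * r * q)) with hA
  by_cases h1 : r ∈ Set.Icc (R - q) (R + q)
  · rw [if_pos h1]
    field_simp
  · rw [if_neg h1]
    rw [Set.mem_Icc, not_and_or] at h1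
    rcases h1 with h2 | h2
    · push_neg at h2
      have h3 : r ∈ Set.Ico (0:ℝ) (R - q) := ⟨hr.le, h2⟩
      rw [if_pos h3]
      have harc : A = Real.pi := by
        rw [hA]; apply Real.arccos_eq_pi.2
        rw [div_le_iff₀ (by positivity)]
        nlinarith
      rw [harc]
      have hR : (0:ℝ) < R ^ 2 := by positivity
      field_simp
    · push_neg at h2
      rw [if_neg (fun h3 => by linarith [h3.2])]
      have harc : A = 0 := by
        rw [hA]; apply Real.arccos_eq_zero.2
        rw [le_div_iff₀ (by positivity)]
        nlinarith
      rw [harc]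
      ring

theorem mcp_lintegral_Iic_eq_Ioc (R q : ℝ) (hq : 0 < q) (hqR : q < R) (g : ℝ) :
    ∫⁻ r in Iic g, ENNReal.ofReal (mcpF R q r) = ∫⁻ r in Ioc 0 g, ENNReal.ofReal (mcpF R q r) := by
  have hzero : ∫⁻ r in Iic (min g 0), ENNReal.ofReal (mcpF R q r) = 0 := by
    rw [← lintegral_zero (μ := volume.restrict (Iic (min g 0)))]
    refine setLIntegral_congr_fun_ae measurableSet_Iic (Filter.Eventually.of_forall fun r hr => ?_)
    rw [mcpF_zero_of_nonpos R q hq hqR (le_trans hr (min_le_right g 0)), ENNReal.ofReal_zero]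
  rcases le_or_gt g 0 with hg | hg
  · rw [Ioc_eq_empty (not_lt.2 hg), Measure.restrict_empty, lintegral_zero_measure]
    simpa [min_eq_left hg] using hzero
  · rw [← Set.Iic_union_Ioc_eq_Iic hg.le, lintegral_union measurableSet_Ioc
      (Set.Iic_disjoint_Ioc le_rfl)]
    have h1 : ∫⁻ a in Iic (0:ℝ), ENNReal.ofReal (mcpF R q a) = 0 := by
      simpa [min_eq_right hg.le] using hzero
    rw [h1, zero_add]

theorem mcp_volume_inter (R q : ℝ) (hq : 0 < q) (hqR : q < R) (g : ℝ) :
    volume (ball (q:ℂ) R ∩ closedBall 0 g) =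
      ENNReal.ofReal (Real.pi * R ^ 2) * ∫⁻ r in Iic g, ENNReal.ofReal (mcpF R q r) := by
  have hR : (0:ℝ) < R := lt_trans hq hqR
  set S : Set ℂ := ball (q:ℂ) R ∩ closedBall 0 g with hS
  have hSm : MeasurableSet S := measurableSet_ball.inter measurableSet_closedBall
  have hf : Measurable (S.indicator (fun _ => (1:ENNReal))) := measurable_const.indicator hSm
  have h0 : volume S = ∫⁻ z, S.indicator (fun _ => (1:ENNReal)) z := (lintegral_indicator_one hSm).symm
  rw [h0, ← Complex.lintegral_comp_polarCoord_symm' _ hf]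
  have htarget : polarCoord.target = Ioi (0:ℝ) ×ˢ Ioo (-π) π := rfl
  have hcont : Continuous fun p : ℝ × ℝ => Complex.polarCoord.symm p := by
    simp only [Complex.polarCoord_symm_apply]
    fun_prop
  have hmeas : Measurable fun p : ℝ × ℝ =>
      ENNReal.ofReal p.1 * S.indicator (fun _ => (1:ENNReal)) (Complex.polarCoord.symm p) :=
    measurable_fst.ennreal_ofReal.mul (hf.comp hcont.measurable)
  rw [htarget, Measure.volume_eq_prod, ← Measure.prod_restrict,
    lintegral_prod _ hmeas.aemeasurable]
  have hinner : ∀ r ∈ Ioi (0:ℝ),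
      (∫⁻ θ in Ioo (-π) π, ENNReal.ofReal (r, θ).1 *
          S.indicator (fun _ => (1:ENNReal)) (Complex.polarCoord.symm (r, θ)))
      = (Iic g).indicator (fun r => ENNReal.ofReal r *
          ENNReal.ofReal (2 * Real.arccos ((r^2+q^2-R^2)/(2*r*q)))) r := by
    intro r hr
    have hr0 : (0:ℝ) < r := hr
    have hmem : ∀ θ : ℝ, Complex.polarCoord.symm (r, θ) ∈ S ↔
        ((r^2+q^2-R^2)/(2*r*q) < Real.cos θ ∧ r ≤ g) := by
      intro θ
      rw [Complex.polarCoord_symm_apply]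
      simp only [hS, Set.mem_inter_iff, Metric.mem_ball, Metric.mem_closedBall,
        Complex.dist_eq, sub_zero]
      have habs : ‖(r:ℂ) * (Real.cos θ + Real.sin θ * Complex.I)‖ = r := by
        rw [norm_mul, Complex.norm_add_mul_I, Real.cos_sq_add_sin_sq, Real.sqrt_one, mul_one,
          Complex.norm_of_nonneg hr0.le]
      rw [habs]
      have h1 : ‖(r:ℂ) * (Real.cos θ + Real.sin θ * Complex.I) - q‖ < R ↔
          ‖(r:ℂ) * (Real.cos θ + Real.sin θ * Complex.I) - q‖ ^ 2 < R ^ 2 :=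
        (pow_lt_pow_iff_left₀ (norm_nonneg _) hR.le two_ne_zero).symm
      rw [h1, Complex.sq_norm, Complex.normSq_apply]
      have h2 : (((r:ℂ) * (Real.cos θ + Real.sin θ * Complex.I) - q).re) = r * Real.cos θ - q := by
        simp [Complex.mul_re, Complex.cos_ofReal_re, Complex.sin_ofReal_re]
      have h3 : (((r:ℂ) * (Real.cos θ + Real.sin θ * Complex.I) - q).im) = r * Real.sin θ := by
        simp [Complex.mul_im, Complex.cos_ofReal_re, Complex.sin_ofReal_re]
      rw [h2, h3, and_congr_left_iff]
      intro _
      rw [div_lt_iff₀ (by positivity : (0:ℝ) < 2 * r * q)]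
      constructor
      · intro h; nlinarith [Real.sin_sq_add_cos_sq θ]
      · intro h; nlinarith [Real.sin_sq_add_cos_sq θ]
    by_cases hrg : r ≤ g
    · rw [Set.indicator_of_mem (by exact hrg : r ∈ Iic g)]
      have hcongr : ∀ θ : ℝ, S.indicator (fun _ => (1:ENNReal)) (Complex.polarCoord.symm (r, θ))
          = {θ : ℝ | (r^2+q^2-R^2)/(2*r*q) < Real.cos θ}.indicator (fun _ => (1:ENNReal)) θ := by
        intro θ
        by_cases hθ : θ ∈ {θ : ℝ | (r^2+q^2-R^2)/(2*r*q) < Real.cos θ}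
        · rw [Set.indicator_of_mem ((hmem θ).2 ⟨hθ, hrg⟩), Set.indicator_of_mem hθ]
        · rw [Set.indicator_of_notMem (fun hx => hθ ((hmem θ).1 hx).1),
            Set.indicator_of_notMem hθ]
      simp only [hcongr]
      rw [lintegral_const_mul' _ _ ENNReal.ofReal_ne_top]
      congr 1
      have hAm : MeasurableSet {θ : ℝ | (r^2+q^2-R^2)/(2*r*q) < Real.cos θ} :=
        measurableSet_lt measurable_const Real.continuous_cos.measurable
      rw [lintegral_indicator hAm, setLIntegral_one, Measure.restrict_apply hAm,
        ← angular_volume ((r^2+q^2-R^2)/(2*r*q))]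
      congr 1
      rw [Set.inter_comm]
      rfl
    · rw [Set.indicator_of_notMem (by exact hrg : r ∉ Iic g)]
      have hcongr : ∀ θ : ℝ, ENNReal.ofReal (r, θ).1 *
          S.indicator (fun _ => (1:ENNReal)) (Complex.polarCoord.symm (r, θ)) = 0 := by
        intro θ
        rw [Set.indicator_of_notMem (fun hx => hrg ((hmem θ).1 hx).2), mul_zero]
      simp only [hcongr]
      exact lintegral_zero
  rw [setLIntegral_congr_fun_ae measurableSet_Ioi (Filter.Eventually.of_forall hinner)]
  rw [lintegral_indicator measurableSet_Iic, Measure.restrict_restrict measurableSet_Iic,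
    Set.Iic_inter_Ioi]
  rw [mcp_lintegral_Iic_eq_Ioc R q hq hqR g, ← lintegral_const_mul' _ _ ENNReal.ofReal_ne_top]
  refine setLIntegral_congr_fun_ae measurableSet_Ioc (Filter.Eventually.of_forall fun r hr => ?_)
  exact (mcpF_key R q hq hqR hr.1).trans
    (ENNReal.ofReal_mul (by positivity : (0:ℝ) ≤ Real.pi * R ^ 2))

theorem volume_ball_complex (R q : ℝ) (hR : 0 ≤ R) :
    volume (ball (q:ℂ) R) = ENNReal.ofReal (Real.pi * R ^ 2) := by
  rw [Complex.volume_ball, mul_comm, ENNReal.ofReal_mul Real.pi_pos.le,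
    ENNReal.ofReal_pow hR, ← NNReal.coe_real_pi, ENNReal.ofReal_coe_nnreal]

theorem mcp_lintegral_Iic_total (R q : ℝ) (hq : 0 < q) (hqR : q < R) :
    ∫⁻ r in Iic (R + q), ENNReal.ofReal (mcpF R q r) = 1 := by
  have hR : (0:ℝ) < R := lt_trans hq hqR
  have hsub : ball (q:ℂ) R ⊆ closedBall 0 (R + q) := by
    intro z hz
    rw [mem_closedBall, Complex.dist_eq, sub_zero]
    have h1 : ‖z - q‖ < R := by rwa [mem_ball, Complex.dist_eq] at hz
    calc ‖z‖ ≤ ‖z - q‖ + ‖(q:ℂ)‖ := by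
          simpa using norm_add_le (z - q) (q:ℂ)
      _ ≤ R + q := by
          rw [Complex.norm_of_nonneg hq.le]
          linarith
  have hkey := mcp_volume_inter R q hq hqR (R + q)
  rw [Set.inter_eq_left.2 hsub, volume_ball_complex R q hR.le] at hkey
  have hne : ENNReal.ofReal (Real.pi * R ^ 2) ≠ 0 :=
    (ENNReal.ofReal_pos.2 (by positivity)).ne'
  have h2 := congrArg (fun x => (ENNReal.ofReal (Real.pi * R ^ 2))⁻¹ * x) hkey
  simpa [← mul_assoc, ENNReal.inv_mul_cancel hne ENNReal.ofReal_ne_top] using h2.symm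

theorem mcp_lintegral_total (R q : ℝ) (hq : 0 < q) (hqR : q < R) :
    ∫⁻ r, ENNReal.ofReal (mcpF R q r) = 1 := by
  rw [← setLIntegral_univ, ← Set.Iic_union_Ioi (a := R + q),
    lintegral_union measurableSet_Ioi (Set.Iic_disjoint_Ioi le_rfl),
    mcp_lintegral_Iic_total R q hq hqR]
  have h0 : ∫⁻ r in Ioi (R + q), ENNReal.ofReal (mcpF R q r) = 0 := by
    rw [← lintegral_zero (μ := volume.restrict (Ioi (R + q)))]
    refine setLIntegral_congr_fun_ae measurableSet_Ioi (Filter.Eventually.of_forall fun r hr => ?_)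
    rw [mcpF_zero_of_gt R q hq hqR hr, ENNReal.ofReal_zero]
  rw [h0, add_zero]

theorem mcp_measure_eq (R q : ℝ) (hq : 0 < q) (hqR : q < R)
    (c : EuclideanSpace ℝ (Fin 2)) (hc : ‖c‖ = q) :
    Measure.map (fun x : EuclideanSpace ℝ (Fin 2) => ‖x‖)
        ((volume (ball c R))⁻¹ • volume.restrict (ball c R)) =
      volume.withDensity (fun g => ENNReal.ofReal (mcpF R q g)) := by
  have hR : (0:ℝ) < R := lt_trans hq hqR
  -- construct the measure preserving isometry sending c to (q : ℂ)
  set ι : EuclideanSpace ℝ (Fin 2) ≃ₗᵢ[ℝ] ℂ := Complex.orthonormalBasisOneI.repr.symm with hι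
  have hz : ‖ι c‖ = q := by rw [ι.norm_map, hc]
  have hz0 : (ι c : ℂ) ≠ 0 := by
    intro h; rw [h] at hz; simp at hz; linarith
  have ha : ((q : ℂ) / ι c) ∈ Submonoid.unitSphere ℂ := by
    show ((q : ℂ) / ι c) ∈ sphere (0:ℂ) 1
    rw [mem_sphere_zero_iff_norm, norm_div,
      Complex.norm_of_nonneg hq.le, hz, div_self hq.ne']
  set φ : EuclideanSpace ℝ (Fin 2) ≃ₗᵢ[ℝ] ℂ := ι.trans (rotation ⟨(q : ℂ) / ι c, ha⟩) with hφ
  have hφc : φ c = (q : ℂ) := by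
    rw [hφ]
    simp only [LinearIsometryEquiv.trans_apply, rotation_apply]
    exact div_mul_cancel₀ _ hz0
  have hφp : MeasurePreserving φ := φ.measurePreserving
  have hcs : φ.symm (q : ℂ) = c := by rw [← hφc, φ.symm_apply_apply]
  have hball : volume (ball c R) = volume (ball (q:ℂ) R) := by
    conv_lhs => rw [← hcs, ← φ.preimage_ball]
    exact hφp.measure_preimage measurableSet_ball.nullMeasurableSet
  have hinter : ∀ a : ℝ, volume (closedBall (0 : EuclideanSpace ℝ (Fin 2)) a ∩ ball c R)
      = volume (closedBall (0:ℂ) a ∩ ball (q:ℂ) R) := by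
    intro a
    rw [← hφp.measure_preimage ((measurableSet_closedBall.inter
      measurableSet_ball).nullMeasurableSet)]
    congr 1
    rw [Set.preimage_inter, φ.preimage_ball, φ.preimage_closedBall, hcs]
    congr 2
    simp
  -- both measures are finite
  have hb0 : volume (ball c R) ≠ 0 := (measure_ball_pos volume c hR).ne'
  have hbt : volume (ball c R) ≠ ⊤ := measure_ball_lt_top.ne
  haveI hP : IsProbabilityMeasure ((volume (ball c R))⁻¹ • volume.restrict (ball c R)) := by
    constructor
    rw [Measure.smul_apply, Measure.restrict_apply_univ, smul_eq_mul,
      ENNReal.inv_mul_cancel hb0 hbt]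
  haveI : IsFiniteMeasure (Measure.map (fun x : EuclideanSpace ℝ (Fin 2) => ‖x‖)
      ((volume (ball c R))⁻¹ • volume.restrict (ball c R))) := by
    haveI := MeasureTheory.Measure.isProbabilityMeasure_map
      (μ := (volume (ball c R))⁻¹ • volume.restrict (ball c R))
      (f := fun x : EuclideanSpace ℝ (Fin 2) => ‖x‖) measurable_norm.aemeasurable
    infer_instance
  refine Measure.ext_of_Iic _ _ fun a => ?_
  rw [Measure.map_apply measurable_norm measurableSet_Iic,
    withDensity_apply _ measurableSet_Iic, Measure.smul_apply,
    Measure.restrict_apply (measurable_norm measurableSet_Iic), smul_eq_mul]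
  have hpre : (fun x : EuclideanSpace ℝ (Fin 2) => ‖x‖) ⁻¹' Iic a = closedBall 0 a := by
    ext x; simp [mem_closedBall_zero_iff]
  rw [hpre, hinter a, Set.inter_comm, mcp_volume_inter R q hq hqR a, hball,
    volume_ball_complex R q hR.le, ← mul_assoc,
    ENNReal.inv_mul_cancel (ENNReal.ofReal_pos.2 (by positivity)).ne' ENNReal.ofReal_ne_top,
    one_mul]

theorem mcp_bochner (R q : ℝ) (hq : 0 < q) (hqR : q < R) :
    (∫ g in Set.Icc (R - q) (R + q),
        (2 * g / (Real.pi * R ^ 2)) *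
          Real.arccos ((g ^ 2 + q ^ 2 - R ^ 2) / (2 * g * q))) +
      (∫ g in Set.Ico (0 : ℝ) (R - q), 2 * g / R ^ 2) = 1 := by
  have hR : (0:ℝ) < R := lt_trans hq hqR
  have h0q : (0:ℝ) ≤ R - q := by linarith
  set F1 : ℝ → ℝ := fun g => (2 * g / (Real.pi * R ^ 2)) *
    Real.arccos ((g ^ 2 + q ^ 2 - R ^ 2) / (2 * g * q)) with hF1
  set F2 : ℝ → ℝ := fun g => 2 * g / R ^ 2 with hF2
  set A : ENNReal := ∫⁻ g in Set.Icc (R - q) (R + q), ENNReal.ofReal (F1 g) with hA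
  set B : ENNReal := ∫⁻ g in Set.Ico (0:ℝ) (R - q), ENNReal.ofReal (F2 g) with hB
  have hIcc : ∫⁻ g in Set.Icc (R - q) (R + q), ENNReal.ofReal (mcpF R q g) = A := by
    refine setLIntegral_congr_fun_ae measurableSet_Icc (Filter.Eventually.of_forall fun g hg => ?_)
    rw [mcpF, if_pos hg]
  have hIco : ∫⁻ g in Set.Ico (0:ℝ) (R - q), ENNReal.ofReal (mcpF R q g) = B := by
    refine setLIntegral_congr_fun_ae measurableSet_Ico (Filter.Eventually.of_forall fun g hg => ?_)
    rw [mcpF, if_neg (fun h => absurd h.1 (not_le.2 hg.2)), if_pos hg]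
  have hIio0 : ∫⁻ g in Set.Iio (0:ℝ), ENNReal.ofReal (mcpF R q g) = 0 := by
    rw [← lintegral_zero (μ := volume.restrict (Iio (0:ℝ)))]
    refine setLIntegral_congr_fun_ae measurableSet_Iio (Filter.Eventually.of_forall fun g hg => ?_)
    rw [mcpF_zero_of_nonpos R q hq hqR (le_of_lt hg), ENNReal.ofReal_zero]
  have hsplit : B + A = 1 := by
    have h1 := mcp_lintegral_Iic_total R q hq hqR
    rw [← Set.Iio_union_Icc_eq_Iic (by linarith : R - q ≤ R + q),
      lintegral_union measurableSet_Icc ((Set.Iio_disjoint_Ici le_rfl).mono_right Set.Icc_subset_Ici_self)] at h1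
    rw [← Set.Iio_union_Ico_eq_Iio h0q,
      lintegral_union measurableSet_Ico ((Set.Iio_disjoint_Ici le_rfl).mono_right Set.Ico_subset_Ici_self), hIio0, zero_add,
      hIco, hIcc] at h1
    exact h1
  have hAne : A ≠ ⊤ := by
    refine ne_top_of_le_ne_top ENNReal.one_ne_top ?_
    rw [← hsplit]; exact le_add_self
  have hBne : B ≠ ⊤ := by
    refine ne_top_of_le_ne_top ENNReal.one_ne_top ?_
    rw [← hsplit]; exact le_self_add
  have hi1 : ∫ g in Set.Icc (R - q) (R + q), F1 g = A.toReal := by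
    rw [hA, integral_eq_lintegral_of_nonneg_ae]
    · refine (ae_restrict_iff' measurableSet_Icc).2 (ae_of_all _ fun g hg => ?_)
      exact mul_nonneg (div_nonneg (by linarith [hg.1]) (by positivity)) (Real.arccos_nonneg _)
    · refine Measurable.aestronglyMeasurable ?_
      exact ((measurable_id.const_mul 2 |>.div_const _).mul
        (Real.continuous_arccos.measurable.comp (by fun_prop)))
  have hi2 : ∫ g in Set.Ico (0:ℝ) (R - q), F2 g = B.toReal := by
    rw [hB, integral_eq_lintegral_of_nonneg_ae]
    · refine (ae_restrict_iff' measurableSet_Ico).2 (ae_of_all _ fun g hg => ?_)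
      exact div_nonneg (by linarith [hg.1]) (by positivity)
    · exact Measurable.aestronglyMeasurable (by fun_prop)
  rw [hi1, hi2, ← ENNReal.toReal_add hAne hBne, add_comm A B, hsplit, ENNReal.toReal_one]

end MCPAux

/-- Conditional distance distribution in a Matern cluster process (near parent,
`0 < q < R`): the distance from the origin to a uniform point in the disk of radius `R`
centered at distance `q` has the piecewise density
`(2g/(πR²)) arccos((g²+q²−R²)/(2gq))` for `R−q ≤ g ≤ R+q` and `2g/R²` for
`0 ≤ g < R−q`, and this piecewise density integrates to 1. -/
theorem mcp_conditional_distance_density_near (R q : ℝ) (hq : 0 < q) (hqR : q < R)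
    (c : EuclideanSpace ℝ (Fin 2)) (hc : ‖c‖ = q) :
    (Measure.map (fun x : EuclideanSpace ℝ (Fin 2) => ‖x‖)
        ((volume (ball c R))⁻¹ • volume.restrict (ball c R)) =
      volume.withDensity (fun g => ENNReal.ofReal
        (if g ∈ Set.Icc (R - q) (R + q) then
          (2 * g / (Real.pi * R ^ 2)) *
            Real.arccos ((g ^ 2 + q ^ 2 - R ^ 2) / (2 * g * q))
         else if g ∈ Set.Ico (0 : ℝ) (R - q) then 2 * g / R ^ 2
         else 0))) ∧
    (∫ g in Set.Icc (R - q) (R + q),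
        (2 * g / (Real.pi * R ^ 2)) *
          Real.arccos ((g ^ 2 + q ^ 2 - R ^ 2) / (2 * g * q))) +
      (∫ g in Set.Ico (0 : ℝ) (R - q), 2 * g / R ^ 2) = 1 := by
  exact ⟨mcp_measure_eq R q hq hqR c hc, mcp_bochner R q hq hqR⟩
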